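/- Consider forward selection among p₁ true active predictors, p₀ = p − p₁ null predictors, and L dummies, stopped when T dummies have been selected, where the null predictors and dummies are exchangeable among each other in the selection order. Then the expected total number of selected variables κ satisfies E[κ] ≤ p₁ + T + T·p₀/(L+1); in particular, if L ≥ p₀ then E[κ] ≤ p₁ + 2T. -/

import Mathlib

open MeasureTheory ProbabilityTheory Real Filter
open scoped ENNReal NNReal RealInnerProductSpace

noncomputable def stdGaussianPi (ι : Type*) [Fintype ι] : Measure (ι → ℝ) :=
  Measure.pi fun _ => gaussianReal 0 1

noncomputable def stdGaussianE (m : ℕ) : Measure (EuclideanSpace ℝ (Fin m)) :=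
  (stdGaussianPi (Fin m)).map (MeasurableEquiv.toLp 2 (Fin m → ℝ))

/-- The uniform distribution on the unit sphere of `ℝ^m`, as the law of `g/‖g‖` for a
standard Gaussian `g`. -/
noncomputable def uniformSphere (m : ℕ) : Measure (EuclideanSpace ℝ (Fin m)) :=
  (stdGaussianE m).map fun x => ‖x‖⁻¹ • x

/-- The uniform distribution on the unit sphere of a subspace `W ⊆ ℝ^m`, viewed as a measure
on the ambient space. -/
noncomputable def uniformSphereIn {m : ℕ} (W : Submodule ℝ (EuclideanSpace ℝ (Fin m))) :
    Measure (EuclideanSpace ℝ (Fin m)) :=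
  (stdGaussianE m).map fun x =>
    ‖(W.orthogonalProjectionOnto x : EuclideanSpace ℝ (Fin m))‖⁻¹ •
      (W.orthogonalProjectionOnto x : EuclideanSpace ℝ (Fin m))

/-- The Beta(a, b) distribution on ℝ. -/
noncomputable def betaMeasure (a b : ℝ) : Measure ℝ :=
  volume.withDensity fun x =>
    ENNReal.ofReal ((Set.Ioo (0:ℝ) 1).indicator
      (fun y => Real.Gamma (a + b) / (Real.Gamma a * Real.Gamma b)
        * y ^ (a - 1) * (1 - y) ^ (b - 1)) x)

/-- The symmetric Dirichlet(1/2, …, 1/2) distribution, as the law of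
`(g₁²/‖g‖², …, g_m²/‖g‖²)` for a standard Gaussian `g`. -/
noncomputable def dirichletHalf (m : ℕ) : Measure (Fin m → ℝ) :=
  (stdGaussianPi (Fin m)).map fun g i => (g i) ^ 2 / ∑ j, (g j) ^ 2

-- auxiliary lemmas
section aux
open Finset


lemma hockey' (m b : ℕ) : ∑ j ∈ range (m+1), (j+b).choose j = (m+b+1).choose m := by
  induction m with
  | zero => simp
  | succ m ih =>
    rw [Finset.sum_range_succ, ih, show m+1+b+1 = (m+b+1)+1 by ring,
      Nat.choose_succ_succ (m+b+1) m]
    congr 2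
    omega

lemma vand' (n a b : ℕ) :
    ∑ k ∈ Finset.range (n+1), (k+a).choose k * (n-k+b).choose (n-k)
      = (n+a+b+1).choose n := by
  induction n generalizing a with
  | zero => simp
  | succ n ihn =>
    induction a with
    | zero =>
      have h0 : ∑ k ∈ range (n+2), (n+1-k+b).choose (n+1-k)
          = ∑ j ∈ range (n+2), (j+b).choose j := by
        rw [← Finset.sum_range_reflect]
        apply Finset.sum_congr rfl
        intro j hj
        simp only [mem_range] at hj
        congr 1 <;> omega
      simp only [Nat.add_zero, Nat.choose_self, one_mul]
      rw [h0, hockey']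
    | succ a iha =>
      have key : ∑ k ∈ range (n+2), (k+(a+1)).choose k * (n+1-k+b).choose (n+1-k)
          = (∑ k ∈ range (n+2), (k+a).choose k * (n+1-k+b).choose (n+1-k))
            + ∑ k ∈ range (n+1), (k+(a+1)).choose k * (n-k+b).choose (n-k) := by
        rw [Finset.sum_range_succ' (fun k => (k+(a+1)).choose k * (n+1-k+b).choose (n+1-k)) (n+1),
            Finset.sum_range_succ' (fun k => (k+a).choose k * (n+1-k+b).choose (n+1-k)) (n+1)]
        have hsplit : ∀ i ∈ range (n+1),
            ((i+1)+(a+1)).choose (i+1) * (n+1-(i+1)+b).choose (n+1-(i+1))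
            = ((i+1)+a).choose (i+1) * (n+1-(i+1)+b).choose (n+1-(i+1))
              + (i+(a+1)).choose i * (n-i+b).choose (n-i) := by
          intro i hi
          have h1 : (i+1)+(a+1) = (i+(a+1))+1 := by ring
          rw [h1, Nat.choose_succ_succ (i+(a+1)) i]
          have h2 : n+1-(i+1) = n-i := by omega
          rw [h2]
          have h3 : (i+(a+1)).choose (i+1) = ((i+1)+a).choose (i+1) := by
            congr 1; omega
          rw [h3]
          ring
        rw [Finset.sum_congr rfl hsplit, Finset.sum_add_distrib]
        simp only [Nat.zero_add, Nat.choose_zero_right, one_mul, Nat.sub_zero]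
        ring
      have e1 : ∑ k ∈ range (n+2), (k+a).choose k * (n+1-k+b).choose (n+1-k)
          = (n+a+b+2).choose (n+1) := by
        rw [show n+a+b+2 = n+1+a+b+1 by ring]; exact iha
      have e2 : ∑ k ∈ range (n+1), (k+(a+1)).choose k * (n-k+b).choose (n-k)
          = (n+a+b+2).choose n := by
        rw [show n+a+b+2 = n+(a+1)+b+1 by ring]; exact ihn (a+1)
      rw [key, e1, e2, show n+1+(a+1)+b+1 = (n+a+b+2)+1 by ring,
        Nat.choose_succ_succ (n+a+b+2) n, Nat.succ_eq_add_one]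
      omega

lemma meanNHG' (n L T : ℕ) (hT : 1 ≤ T) (hTL : T ≤ L) :
    ∑ ξ ∈ Finset.range (n+2), ξ * ((ξ + T - 1).choose ξ * ((n+1) + L - T - ξ).choose ((n+1) - ξ))
      = T * ((n+1)+L).choose n := by
  rw [Finset.sum_range_succ']
  simp only [Nat.zero_mul, Nat.add_zero, zero_mul, add_zero]
  have hterm : ∀ j ∈ range (n+1),
      (j+1) * ((j+1+T-1).choose (j+1) * ((n+1)+L-T-(j+1)).choose ((n+1)-(j+1)))
      = T * ((j+T).choose j * ((n-j)+(L-T)).choose (n-j)) := by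
    intro j hj
    simp only [mem_range] at hj
    have h1 : j+1+T-1 = j+T := by omega
    have h2 : (n+1)+L-T-(j+1) = (n-j)+(L-T) := by omega
    have h3 : (n+1)-(j+1) = n-j := by omega
    rw [h1, h2, h3, ← mul_assoc, ← mul_assoc]
    congr 1
    have h5 := Nat.choose_succ_right_eq (j+T) j
    have h4 : j + T - j = T := by omega
    rw [h4] at h5
    rw [mul_comm, h5, mul_comm]
  rw [Finset.sum_congr rfl hterm, ← Finset.mul_sum, vand' n T (L-T)]
  congr 2
  omega

end aux

/-- Forward selection with `p₁` active predictors, `p₀ = p − p₁` nulls and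
`L` dummies, stopped at the `T`-th dummy. Exchangeability of nulls and dummies is modeled
by `Ξ ~ NHG(p₀ + L, p₀, T)` counting nulls selected before the `T`-th dummy, with
`κ ≤ p₁ + T + Ξ`. Then `E[κ] ≤ p₁ + T + T·p₀/(L+1)`, and `E[κ] ≤ p₁ + 2T` if `L ≥ p₀`. -/
theorem stmt10 {Ω : Type*} [MeasurableSpace Ω] (P : Measure Ω) [IsProbabilityMeasure P]
    (p p₁ p₀ L T : ℕ) (hp₁ : p₁ ≤ p) (hp₀ : p₀ = p - p₁)
    (hT1 : 1 ≤ T) (hTL : T ≤ L)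
    (Ξ : Ω → ℕ) (hΞ : Measurable Ξ)
    (hsupp : ∀ᵐ ω ∂P, Ξ ω ≤ p₀)
    (hpmf : ∀ ξ : ℕ, ξ ≤ p₀ →
      (P {ω | Ξ ω = ξ}).toReal
        = ((ξ + T - 1).choose ξ * (p₀ + L - T - ξ).choose (p₀ - ξ) : ℕ)
            / ((p₀ + L).choose p₀ : ℕ))
    (κ : Ω → ℕ) (hκm : Measurable κ)
    (hκ : ∀ ω, κ ω ≤ p₁ + T + Ξ ω) :
    ∫ ω, (κ ω : ℝ) ∂P ≤ (p₁ : ℝ) + T + (T : ℝ) * p₀ / ((L : ℝ) + 1)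
    ∧ (p₀ ≤ L → ∫ ω, (κ ω : ℝ) ∂P ≤ (p₁ : ℝ) + 2 * T) := by
  classical
  have hS : ∀ ξ : ℕ, MeasurableSet {ω | Ξ ω = ξ} :=
    fun ξ => hΞ (measurableSet_singleton ξ)
  set g : Ω → ℝ :=
    fun ω => ∑ ξ ∈ Finset.range (p₀+1),
      Set.indicator {ω' | Ξ ω' = ξ} (fun _ => (ξ:ℝ)) ω with hg
  have hgint : Integrable g P := by
    apply integrable_finset_sum
    intro ξ _
    exact (integrable_const ((ξ:ℝ))).indicator (hS ξ)
  have hae : (fun ω => (Ξ ω : ℝ)) =ᵐ[P] g := by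
    filter_upwards [hsupp] with ω hω
    simp only [hg, Set.indicator_apply, Set.mem_setOf_eq]
    rw [Finset.sum_ite_eq (Finset.range (p₀+1)) (Ξ ω) (fun ξ => (ξ:ℝ))]
    rw [if_pos (Finset.mem_range.mpr (by omega))]
  have hΞint : Integrable (fun ω => (Ξ ω : ℝ)) P := hgint.congr hae.symm
  have hΞval : ∫ ω, (Ξ ω : ℝ) ∂P
      = ∑ ξ ∈ Finset.range (p₀+1), (ξ:ℝ) * (P {ω | Ξ ω = ξ}).toReal := by
    rw [integral_congr_ae hae, hg]
    rw [integral_finset_sum _ (fun (ξ : ℕ) _ => (integrable_const ((ξ:ℝ))).indicator (hS ξ))]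
    refine Finset.sum_congr rfl fun ξ _ => ?_
    rw [MeasureTheory.integral_indicator_const (E := ℝ) ((ξ:ℝ)) (hS ξ)]
    simp [mul_comm, measureReal_def]
  have hsum : ∫ ω, (Ξ ω : ℝ) ∂P = (T:ℝ) * p₀ / ((L:ℝ)+1) := by
    rw [hΞval]
    rcases Nat.eq_zero_or_pos p₀ with h0 | hpos
    · subst h0; simp
    · obtain ⟨n, rfl⟩ : ∃ n, p₀ = n+1 := ⟨p₀-1, by omega⟩
      have hterm : ∀ ξ ∈ Finset.range (n+2), (ξ:ℝ) * (P {ω | Ξ ω = ξ}).toReal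
          = ((ξ * ((ξ+T-1).choose ξ * ((n+1)+L-T-ξ).choose ((n+1)-ξ)) : ℕ) : ℝ)
            / (((n+1+L).choose (n+1) : ℕ) : ℝ) := by
        intro ξ hξ
        simp only [Finset.mem_range] at hξ
        rw [hpmf ξ (by omega)]
        push_cast
        ring
      rw [Finset.sum_congr rfl hterm, ← Finset.sum_div, ← Nat.cast_sum,
        meanNHG' n L T hT1 hTL]
      have hCpos : 0 < (n+1+L).choose (n+1) := Nat.choose_pos (by omega)
      have hCne : (((n+1+L).choose (n+1) : ℕ) : ℝ) ≠ 0 := by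
        exact_mod_cast hCpos.ne'
      have hLne : ((L:ℝ)+1) ≠ 0 := by positivity
      rw [div_eq_div_iff hCne hLne]
      have hkey : ((n+1)+L).choose (n+1) * (n+1) = ((n+1)+L).choose n * (L+1) := by
        have h5 := Nat.choose_succ_right_eq ((n+1)+L) n
        rw [show (n+1)+L-n = L+1 by omega] at h5
        exact h5
      have hk' : (((n+1+L).choose (n+1) : ℕ) : ℝ) * ((n:ℝ)+1)
          = (((n+1+L).choose n : ℕ) : ℝ) * ((L:ℝ)+1) := by
        exact_mod_cast hkey
      push_cast
      linear_combination (-(T:ℝ)) * hk'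
  have hκcast : Measurable (fun ω => (κ ω : ℝ)) :=
    Measurable.comp (measurable_from_top) hκm
  have hκint : Integrable (fun ω => (κ ω : ℝ)) P := by
    apply Integrable.mono' (integrable_const ((p₁:ℝ)+T+p₀)) hκcast.aestronglyMeasurable
    filter_upwards [hsupp] with ω hω
    rw [Real.norm_eq_abs, abs_of_nonneg (by positivity)]
    have h := hκ ω
    have : κ ω ≤ p₁ + T + p₀ := by omega
    exact_mod_cast this
  have hint2 : Integrable (fun ω => (p₁:ℝ) + T + (Ξ ω : ℝ)) P :=
    (integrable_const ((p₁:ℝ) + T)).add hΞint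
  have hmono : ∫ ω, (κ ω : ℝ) ∂P ≤ ∫ ω, ((p₁:ℝ) + T + (Ξ ω : ℝ)) ∂P := by
    apply integral_mono_ae hκint hint2
    filter_upwards with ω
    have h := hκ ω
    have h2 : (κ ω : ℝ) ≤ ((p₁ + T + Ξ ω : ℕ) : ℝ) := by exact_mod_cast h
    push_cast at h2
    linarith
  have hrhs : ∫ ω, ((p₁:ℝ) + T + (Ξ ω : ℝ)) ∂P
      = (p₁:ℝ) + T + (T:ℝ) * p₀ / ((L:ℝ)+1) := by
    rw [integral_add (integrable_const _) hΞint, integral_const, measureReal_def, measure_univ,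
      ENNReal.toReal_one, one_smul, hsum]
  have hmain : ∫ ω, (κ ω : ℝ) ∂P ≤ (p₁:ℝ) + T + (T:ℝ) * p₀ / ((L:ℝ)+1) := by
    rw [← hrhs]; exact hmono
  refine ⟨hmain, fun hp₀L => ?_⟩
  have h2 : (T:ℝ) * p₀ / ((L:ℝ)+1) ≤ T := by
    rw [div_le_iff₀ (by positivity)]
    have hp : (p₀:ℝ) ≤ (L:ℝ)+1 := by exact_mod_cast Nat.le_succ_of_le hp₀L
    nlinarith [Nat.cast_nonneg (α := ℝ) T, Nat.cast_nonneg (α := ℝ) p₀]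
  linarith
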